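/- arXiv:2408.01702 — 3 statements merged into one kernel-verified Lean document; each statement's English description precedes it below -/
import Mathlib

section
/- Let M > 0, τ ∈ [0, 1/M), t = arcsin(Mτ) ∈ [0, π/2), and let v ~ Uniform[0, 2π). Define φ(v) = 1 if (1/M)cos(v) > τ and φ(v) = −1 otherwise. Then E[(1/M)·cos(v)·φ(v)] = (2/(Mπ))·cos(t). -/
open Real MeasureTheory

/-- Lemma 3: with `v ~ Uniform[0, 2π)`, `t = arcsin(Mτ) ∈ [0, π/2)`, and the
thresholding rule `φ(v) = 1` if `(1/M)cos v > τ`, `−1` otherwise,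
`E[(1/M)·cos(v)·φ(v)] = (2/(Mπ))·cos t`. -/
theorem stmt_3 (M τ : ℝ) (hM : 0 < M) (hτ0 : 0 ≤ τ) (hτ : τ < 1 / M)
    (t : ℝ) (ht : t = Real.arcsin (M * τ))
    (φ : ℝ → ℝ)
    (hφ : ∀ v, φ v = if (1 / M) * Real.cos v > τ then (1 : ℝ) else -1) :
    (1 / (2 * Real.pi)) *
      ∫ v in (0 : ℝ)..(2 * Real.pi), (1 / M) * Real.cos v * φ v
      = (2 / (M * Real.pi)) * Real.cos t := by
  set c : ℝ := M * τ with hc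
  have hc0 : 0 ≤ c := mul_nonneg hM.le hτ0
  have hc1 : c < 1 := by
    rw [hc]
    calc M * τ < M * (1 / M) := by exact (mul_lt_mul_iff_right₀ hM).mpr hτ
    _ = 1 := by field_simp
  set a : ℝ := Real.arccos c with ha
  have hca : Real.cos a = c := Real.cos_arccos (by linarith) hc1.le
  have ha0 : 0 < a := Real.arccos_pos.mpr hc1
  have ha2 : a ≤ π / 2 := Real.arccos_le_pi_div_two.mpr hc0
  have hpi : 0 < π := Real.pi_pos
  -- the condition rewrite
  have hcond : ∀ v, ((1 / M) * Real.cos v > τ) ↔ Real.cos v > c := by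
    intro v
    constructor <;> intro h
    · rw [hc]
      calc M * τ < M * (1/M * Real.cos v) := mul_lt_mul_of_pos_left h hM
        _ = Real.cos v := by field_simp
    · calc τ = (1/M) * (M * τ) := by field_simp
        _ = (1/M) * c := by rw [hc]
        _ < 1/M * Real.cos v := mul_lt_mul_of_pos_left h (by positivity)
  set g : ℝ → ℝ := fun v => if Real.cos v > c then Real.cos v else -Real.cos v with hg
  have hfg : ∀ v, (1 / M) * Real.cos v * φ v = (1 / M) * g v := by
    intro v
    rw [hφ v, hg]
    simp only [hcond v]
    by_cases h : Real.cos v > c <;> simp [h]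
  -- integrability of g on any interval
  have hgmeas : Measurable g := by
    apply Measurable.ite (measurableSet_lt measurable_const Real.continuous_cos.measurable)
      Real.continuous_cos.measurable Real.continuous_cos.measurable.neg
  have hgint : ∀ x y : ℝ, IntervalIntegrable g volume x y := by
    intro x y
    refine (intervalIntegrable_const (c := (1:ℝ))).mono_fun
      hgmeas.aestronglyMeasurable.restrict ?_
    filter_upwards with v
    rw [hg]
    by_cases h : Real.cos v > c <;> simp [h, abs_le] <;>
      constructor <;> linarith [Real.neg_one_le_cos v, Real.cos_le_one v]
  -- values on the three intervals
  have h1 : ∫ v in (0:ℝ)..a, g v = ∫ v in (0:ℝ)..a, Real.cos v := by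
    apply intervalIntegral.integral_congr_ae
    have hae : ∀ᵐ v : ℝ, v ≠ a := by
      rw [MeasureTheory.ae_iff]
      simp only [ne_eq, not_not, Set.setOf_eq_eq_singleton]
      exact MeasureTheory.measure_singleton a
    filter_upwards [hae] with v hv hmem
    rw [Set.uIoc_of_le ha0.le] at hmem
    have hva : v < a := lt_of_le_of_ne hmem.2 hv
    have : Real.cos a < Real.cos v :=
      Real.cos_lt_cos_of_nonneg_of_le_pi hmem.1.le (by linarith) hva
    simp only [hg]
    rw [if_pos (hca ▸ this)]
  have h2 : ∫ v in a..(2*π - a), g v = ∫ v in a..(2*π - a), -Real.cos v := by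
    apply intervalIntegral.integral_congr
    intro v hv
    rw [Set.uIcc_of_le (by linarith)] at hv
    have hle : Real.cos v ≤ c := by
      rcases le_or_gt v π with h | h
      · calc Real.cos v ≤ Real.cos a :=
              Real.cos_le_cos_of_nonneg_of_le_pi ha0.le h hv.1
          _ = c := hca
      · have : Real.cos v = Real.cos (2*π - v) := by
          rw [Real.cos_sub]; simp [Real.cos_two_pi, Real.sin_two_pi]
        rw [this]
        calc Real.cos (2*π - v) ≤ Real.cos a :=
              Real.cos_le_cos_of_nonneg_of_le_pi ha0.le (by linarith) (by linarith [hv.2])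
          _ = c := hca
    simp only [hg]
    rw [if_neg (not_lt.mpr hle)]
  have h3 : ∫ v in (2*π - a)..(2*π), g v = ∫ v in (2*π - a)..(2*π), Real.cos v := by
    apply intervalIntegral.integral_congr_ae
    filter_upwards with v hmem
    rw [Set.uIoc_of_le (by linarith)] at hmem
    have hgt : c < Real.cos v := by
      have : Real.cos v = Real.cos (2*π - v) := by
        rw [Real.cos_sub]; simp [Real.cos_two_pi, Real.sin_two_pi]
      rw [this, ← hca]
      exact Real.cos_lt_cos_of_nonneg_of_le_pi (by linarith [hmem.2]) (by linarith)
        (by linarith [hmem.1])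
    simp only [hg]
    rw [if_pos hgt]
  -- splitting
  have hsplit : ∫ v in (0:ℝ)..(2*π), g v =
      (∫ v in (0:ℝ)..a, g v) + (∫ v in a..(2*π - a), g v) + (∫ v in (2*π - a)..(2*π), g v) := by
    rw [intervalIntegral.integral_add_adjacent_intervals (hgint _ _) (hgint _ _),
      intervalIntegral.integral_add_adjacent_intervals (hgint _ _) (hgint _ _)]
  have hval : ∫ v in (0:ℝ)..(2*π), g v = 4 * Real.sin a := by
    rw [hsplit, h1, h2, h3]
    rw [intervalIntegral.integral_neg]
    simp only [integral_cos]
    have : Real.sin (2*π - a) = -Real.sin a := by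
      rw [Real.sin_sub]; simp [Real.sin_two_pi, Real.cos_two_pi]
    rw [this]
    simp [Real.sin_two_pi, Real.sin_zero]
    ring
  have hsa : Real.sin a = Real.cos t := by
    rw [ha, ht, Real.sin_arccos, Real.cos_arcsin]
  have hint : ∫ v in (0:ℝ)..(2*π), (1 / M) * Real.cos v * φ v
      = (1/M) * (4 * Real.cos t) := by
    calc ∫ v in (0:ℝ)..(2*π), (1 / M) * Real.cos v * φ v
        = ∫ v in (0:ℝ)..(2*π), (1/M) * g v := by
          apply intervalIntegral.integral_congr; intro v _; exact hfg v
      _ = (1/M) * ∫ v in (0:ℝ)..(2*π), g v := by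
          rw [intervalIntegral.integral_const_mul]
      _ = (1/M) * (4 * Real.cos t) := by rw [hval, hsa]
  rw [hint]
  field_simp
  ring
end

section
/- Let c > 0 (representing 2πP₀/(P_PIN·M) − π > −π with P₀ > 0) and define f(t) = (c + 2t)·cos²(t) on [0, π/2), assuming c + 2t > 0 for all t in this interval. Then f has a unique critical point t⋆ ∈ (0, π/2), characterized by 1/(c + 2t⋆) = tan(t⋆), and f attains its maximum on [0, π/2) at t⋆. -/
/-! With `g t = (c + 2t) sin t - cos t` (`critFun` below) one has `f' = -2 cos · g`.
On `[0, π/2]` the function `g` increases strictly (its derivative `(c + 2t) cos t + 3 sin t`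
is positive) from `-1` to `c + π`, so it has exactly one zero `t⋆`, which lies in the open
interval; there `g = 0` is the equation `1/(c + 2t) = tan t`.
Hence `f` increases on `[0, t⋆]` and decreases on `[t⋆, π/2]`. -/

open Real Set

namespace PinSNR

variable {c : ℝ}

noncomputable def critFun (c t : ℝ) : ℝ := sin t * (c + 2 * t) - cos t

lemma hasDerivAt_critFun (c t : ℝ) :
    HasDerivAt (critFun c) (cos t * (c + 2 * t) + 3 * sin t) t :=
  ((hasDerivAt_sin t).mul (((hasDerivAt_id' t).const_mul 2).const_add c)).sub (hasDerivAt_cos t)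
    |>.congr_deriv (by ring)

lemma continuous_critFun (c : ℝ) : Continuous (critFun c) :=
  continuous_iff_continuousAt.2 fun t => (hasDerivAt_critFun c t).continuousAt

lemma strictMonoOn_critFun (hc : 0 ≤ c) : StrictMonoOn (critFun c) (Icc 0 (π / 2)) := by
  refine strictMonoOn_of_hasDerivWithinAt_pos (convex_Icc _ _)
    (continuous_critFun c).continuousOn (fun t _ => (hasDerivAt_critFun c t).hasDerivWithinAt)
    fun t ht => ?_
  rw [interior_Icc] at ht
  have hcos : 0 < cos t := cos_pos_of_mem_Ioo ⟨by linarith [pi_pos, ht.1], ht.2⟩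
  have hsin : 0 < sin t := sin_pos_of_pos_of_lt_pi ht.1 (by linarith [pi_pos, ht.2])
  have hlin : 0 < c + 2 * t := by linarith [ht.1]
  positivity

lemma exists_mem_Ioo_critFun_eq_zero (hc : -π < c) :
    ∃ t ∈ Ioo 0 (π / 2), critFun c t = 0 := by
  have hzero : (0 : ℝ) ∈ Ioo (critFun c 0) (critFun c (π / 2)) := by
    simp only [critFun, sin_zero, cos_zero, sin_pi_div_two, cos_pi_div_two, mem_Ioo]
    constructor <;> linarith
  exact intermediate_value_Ioo (by positivity) (continuous_critFun c).continuousOn hzero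

lemma one_div_eq_tan_iff_critFun_eq_zero {t : ℝ} (hlin : c + 2 * t ≠ 0) (hcos : cos t ≠ 0) :
    1 / (c + 2 * t) = tan t ↔ critFun c t = 0 := by
  rw [tan_eq_sin_div_cos, div_eq_div_iff hlin hcos, critFun, sub_eq_zero, eq_comm, one_mul,
    mul_comm]

lemma hasDerivAt_mul_cos_sq (c t : ℝ) :
    HasDerivAt (fun t => (c + 2 * t) * cos t ^ 2) (-2 * cos t * critFun c t) t :=
  (((hasDerivAt_id' t).const_mul 2).const_add c).mul ((hasDerivAt_cos t).pow 2)
    |>.congr_deriv (by simp only [critFun, Pi.pow_apply]; ring)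

lemma isMaxOn_mul_cos_sq (hc : 0 ≤ c) {s : ℝ} (hs : s ∈ Ioo 0 (π / 2))
    (hs₀ : critFun c s = 0) :
    IsMaxOn (fun t => (c + 2 * t) * cos t ^ 2) (Icc 0 (π / 2)) s := by
  have hcont : Continuous fun t => (c + 2 * t) * cos t ^ 2 := by fun_prop
  have hmono := strictMonoOn_critFun hc
  have hsIcc : s ∈ Icc 0 (π / 2) := Ioo_subset_Icc_self hs
  have hinc : MonotoneOn (fun t => (c + 2 * t) * cos t ^ 2) (Icc 0 s) := by
    refine monotoneOn_of_hasDerivWithinAt_nonneg (convex_Icc _ _) hcont.continuousOn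
      (fun t _ => (hasDerivAt_mul_cos_sq c t).hasDerivWithinAt) fun t ht => ?_
    rw [interior_Icc] at ht
    have hcos : 0 < cos t :=
      cos_pos_of_mem_Ioo ⟨by linarith [pi_pos, ht.1], by linarith [ht.2, hs.2]⟩
    have hneg : critFun c t < 0 :=
      hs₀ ▸ hmono ⟨ht.1.le, by linarith [ht.2, hs.2]⟩ hsIcc ht.2
    nlinarith
  have hdec : AntitoneOn (fun t => (c + 2 * t) * cos t ^ 2) (Icc s (π / 2)) := by
    refine antitoneOn_of_hasDerivWithinAt_nonpos (convex_Icc _ _) hcont.continuousOn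
      (fun t _ => (hasDerivAt_mul_cos_sq c t).hasDerivWithinAt) fun t ht => ?_
    rw [interior_Icc] at ht
    have hcos : 0 < cos t := cos_pos_of_mem_Ioo ⟨by linarith [pi_pos, ht.1, hs.1], ht.2⟩
    have hpos : 0 < critFun c t :=
      hs₀ ▸ hmono hsIcc ⟨by linarith [ht.1, hs.1], ht.2.le⟩ ht.1
    nlinarith
  intro t ht
  rcases le_total t s with hts | hst
  · exact hinc ⟨ht.1, hts⟩ ⟨hs.1.le, le_rfl⟩ hts
  · exact hdec ⟨le_rfl, hs.2.le⟩ ⟨hst, ht.2⟩ hst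

end PinSNR

open PinSNR in
/-- Lemma 4 (abstract form): for `c > 0`, the function `f(t) = (c + 2t)·cos²t`
on `[0, π/2)` has a unique critical point `t⋆ ∈ (0, π/2)`, characterized by
`1/(c + 2t⋆) = tan t⋆`, and `f` attains its maximum on `[0, π/2)` at `t⋆`. -/
theorem stmt_5 (c : ℝ) (hc : 0 < c)
    (f : ℝ → ℝ) (hf : ∀ t, f t = (c + 2 * t) * Real.cos t ^ 2) :
    ∃ tstar ∈ Set.Ioo (0 : ℝ) (Real.pi / 2),
      (1 / (c + 2 * tstar) = Real.tan tstar) ∧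
      (∀ t ∈ Set.Ico (0 : ℝ) (Real.pi / 2), f t ≤ f tstar) ∧
      (∀ t ∈ Set.Ioo (0 : ℝ) (Real.pi / 2),
        1 / (c + 2 * t) = Real.tan t → t = tstar) := by
  have hcrit {t} (ht : t ∈ Ioo 0 (π / 2)) : 1 / (c + 2 * t) = tan t ↔ critFun c t = 0 :=
    one_div_eq_tan_iff_critFun_eq_zero (by linarith [ht.1])
      (cos_pos_of_mem_Ioo ⟨by linarith [pi_pos, ht.1], ht.2⟩).ne'
  obtain ⟨s, hs, hs₀⟩ := exists_mem_Ioo_critFun_eq_zero (c := c) (by linarith [pi_pos])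
  refine ⟨s, hs, (hcrit hs).2 hs₀, fun t ht => ?_, fun t ht htan => ?_⟩
  · rw [hf, hf]
    exact isMaxOn_mul_cos_sq hc.le hs hs₀ (Ico_subset_Icc_self ht)
  · exact (strictMonoOn_critFun hc.le).injOn (Ioo_subset_Icc_self ht) (Ioo_subset_Icc_self hs)
      (((hcrit ht).1 htan).trans hs₀.symm)
end

section
/- Let Ψ ∈ ℂ^{K×K} be Hermitian positive definite, W ∈ ℂ^{K×K}, H ∈ ℂ^{K×N}, σ² > 0, P > 0, and set V = (σ²/P)·Tr(Ψ WᴴW)·I_N + Hᴴ W Ψ Wᴴ H, assumed invertible. Then Tr(Ψ) − Tr(Ψ Wᴴ H V^{−1} Hᴴ W Ψ) = Tr((Ψ^{−1} + (P/(σ²·Tr(Ψ WᴴW)))·Wᴴ H Hᴴ W)^{−1}). -/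
open Matrix
open scoped ComplexOrder

/-!
With `α = (σ²/P)·Tr(ΨWᴴW)` we have `V = α I + (HᴴW) Ψ (WᴴH)`, so the Woodbury identity with
`A = Ψ⁻¹`, `U = WᴴH`, `C = α⁻¹ I` expands the right-hand inverse as
`Ψ - ΨWᴴH V⁻¹ HᴴWΨ`. This needs `α ≠ 0`; when `Tr(ΨWᴴW) = 0`, positive definiteness of `Ψ`
forces `W = 0` and both sides equal `Tr Ψ`.
-/

namespace Matrix

section PosDef

variable {m n 𝕜 : Type*} [Fintype m] [Fintype n] [RCLike 𝕜]

theorem PosDef.trace_mul_conjTranspose_mul_self_eq_zero_iff {Ψ : Matrix n n 𝕜} (hΨ : Ψ.PosDef)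
    {W : Matrix m n 𝕜} : (Ψ * Wᴴ * W).trace = 0 ↔ W = 0 := by
  classical
  refine ⟨fun h ↦ ?_, fun h ↦ by simp [h]⟩
  open MatrixOrder in
  obtain ⟨B, hB⟩ := CStarAlgebra.nonneg_iff_eq_star_mul_self.mp hΨ.posSemidef.nonneg
  rw [star_eq_conjTranspose] at hB
  have hWB : W * Bᴴ = 0 := by
    rw [← trace_conjTranspose_mul_self_eq_zero_iff, ← h, hB, conjTranspose_mul,
      conjTranspose_conjTranspose]
    simp only [Matrix.mul_assoc]
    rw [trace_mul_comm Bᴴ]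
    simp only [Matrix.mul_assoc]
  calc W = W * Ψ * Ψ⁻¹ := (mul_nonsing_inv_cancel_right _ _ hΨ.det_pos.ne'.isUnit).symm
    _ = 0 := by rw [hB, ← Matrix.mul_assoc, hWB, Matrix.zero_mul, Matrix.zero_mul]

end PosDef

section Woodbury

variable {m n α : Type*} [Fintype m] [DecidableEq m] [Fintype n] [DecidableEq n] [Field α]

theorem add_smul_inv_mul_inv_eq_sub (A : Matrix n n α) (U : Matrix n m α) (V : Matrix m n α)
    {c : α} (hc : c ≠ 0) (hA : IsUnit A) (hAc : IsUnit (c • 1 + V * A⁻¹ * U)) :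
    (A + c⁻¹ • (U * V))⁻¹ = A⁻¹ - A⁻¹ * U * (c • 1 + V * A⁻¹ * U)⁻¹ * V * A⁻¹ := by
  have hmul : (c⁻¹ • 1 : Matrix m m α) * c • 1 = 1 := by simp [smul_smul, mul_inv_cancel₀ hc]
  have hinv : (c⁻¹ • 1 : Matrix m m α)⁻¹ = c • 1 := inv_eq_right_inv hmul
  have hC : IsUnit (c⁻¹ • 1 : Matrix m m α) :=
    (isUnit_iff_isUnit_det _).2 (isUnit_det_of_right_inverse hmul)
  have key := add_mul_mul_inv_eq_sub A U (c⁻¹ • 1) V hA hC (hinv ▸ hAc)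
  rwa [hinv, Matrix.mul_smul, Matrix.mul_one, Matrix.smul_mul] at key

end Woodbury

end Matrix

/-- Woodbury-based identity (equation (45), step (a)): for Hermitian positive
definite `Ψ`, with `V = (σ²/P)·Tr(ΨWᴴW)·I + HᴴWΨWᴴH` invertible,
`Tr(Ψ) − Tr(ΨWᴴH V⁻¹ HᴴWΨ) = Tr((Ψ⁻¹ + (P/(σ²·Tr(ΨWᴴW)))·WᴴHHᴴW)⁻¹)`. -/
theorem stmt_14 (K N : ℕ) (Ψ W : Matrix (Fin K) (Fin K) ℂ)
    (H : Matrix (Fin K) (Fin N) ℂ) (σ2 P : ℝ) (hσ : 0 < σ2) (hP : 0 < P)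
    (hΨ : Ψ.PosDef)
    (V : Matrix (Fin N) (Fin N) ℂ)
    (hV : V = (((σ2 / P : ℝ) : ℂ) * (Ψ * Wᴴ * W).trace) • (1 : Matrix (Fin N) (Fin N) ℂ)
      + Hᴴ * W * Ψ * Wᴴ * H)
    (hVinv : IsUnit V.det) :
    Ψ.trace - (Ψ * Wᴴ * H * V⁻¹ * Hᴴ * W * Ψ).trace
      = (Ψ⁻¹ + ((P : ℂ) / ((σ2 : ℂ) * (Ψ * Wᴴ * W).trace)) • (Wᴴ * H * Hᴴ * W))⁻¹.trace := by
  have hΨdet : IsUnit Ψ.det := hΨ.det_pos.ne'.isUnit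
  have hΨinv : Ψ⁻¹⁻¹ = Ψ := nonsing_inv_nonsing_inv Ψ hΨdet
  set c := (Ψ * Wᴴ * W).trace
  rcases eq_or_ne c 0 with hc | hc
  · obtain rfl : W = 0 := hΨ.trace_mul_conjTranspose_mul_self_eq_zero_iff.1 hc
    simp [hΨinv]
  set α : ℂ := ((σ2 / P : ℝ) : ℂ) * c
  have hα : α ≠ 0 := mul_ne_zero (by exact_mod_cast (div_pos hσ hP).ne') hc
  have hscal : (P : ℂ) / ((σ2 : ℂ) * c) = α⁻¹ := by
    simp only [α]
    push_cast
    field_simp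
  have hV' : V = α • 1 + Hᴴ * W * Ψ⁻¹⁻¹ * (Wᴴ * H) := by
    rw [hV, hΨinv]
    simp only [Matrix.mul_assoc]
  have hWHHW : Wᴴ * H * Hᴴ * W = (Wᴴ * H) * (Hᴴ * W) := by simp only [Matrix.mul_assoc]
  rw [hscal, hWHHW, add_smul_inv_mul_inv_eq_sub _ _ _ hα
    (isUnit_nonsing_inv_iff.2 hΨ.isUnit)
    (hV' ▸ (isUnit_iff_isUnit_det _).2 hVinv), ← hV', hΨinv, trace_sub]
  simp only [Matrix.mul_assoc]
end
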